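/- Let A be a three-valued propositional structure with associated pair (A^l, A^u) of Boolean valuations (atom is t iff true in both, f iff false in both). If the Kleene value of a formula φ in A is f or t (i.e., not u), then this value equals the pair-evaluation value of φ in (A^l, A^u) and also equals its value in (A^u, A^l). -/
import Mathlib


/-- The three truth values: false, unknown, true. -/
inductive TV : Type
  | f | u | t
deriving DecidableEq

namespace TV

/-- Rank giving the truth order f ≤ u ≤ t. -/
def rank : TV → ℕ
  | f => 0
  | u => 1
  | t => 2

/-- Kleene negation: swaps f and t, fixes u. -/
def negv : TV → TV
  | f => t
  | u => u
  | t => f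

/-- Kleene conjunction: minimum in the truth order f ≤_t u ≤_t t. -/
def minT (a b : TV) : TV := if a.rank ≤ b.rank then a else b

end TV

/-- Propositional formulas built from atoms by negation and conjunction. -/
inductive PForm (α : Type*) : Type _
  | atom (a : α)
  | neg (φ : PForm α)
  | conj (φ ψ : PForm α)

/-- Kleene's three-valued evaluation. -/
def keval {α : Type*} (v : α → TV) : PForm α → TV
  | .atom a => v a
  | .neg φ => (keval v φ).negv
  | .conj φ ψ => (keval v φ).minT (keval v ψ)

/-- Pair-evaluation: positive occurrences of atoms are evaluated by the first
valuation, negative ones by the second. -/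
def peval {α : Type*} : (α → Bool) → (α → Bool) → PForm α → Bool
  | I, _, .atom a => I a
  | I, J, .neg φ => !(peval J I φ)
  | I, J, .conj φ ψ => peval I J φ && peval I J ψ

/-- The lower Boolean valuation A^l of a three-valued structure A: an atom is
true iff its value is t. -/
def low {α : Type*} (A : α → TV) (a : α) : Bool := decide (A a = TV.t)

/-- The upper Boolean valuation A^u of a three-valued structure A: an atom is
true iff its value is not f. -/
def high {α : Type*} (A : α → TV) (a : α) : Bool := decide (A a ≠ TV.f)

private lemma pair_key {α : Type*} (A : α → TV) (φ : PForm α) :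
    (keval A φ = TV.t → peval (low A) (high A) φ = true) ∧
    (keval A φ = TV.f → peval (low A) (high A) φ = false) ∧
    (keval A φ = TV.t → peval (high A) (low A) φ = true) ∧
    (keval A φ = TV.f → peval (high A) (low A) φ = false) := by
  induction φ with
  | atom a =>
    simp only [keval, peval, low, high]
    rcases A a <;> simp
  | neg φ ih =>
    obtain ⟨h1, h2, h3, h4⟩ := ih
    simp only [keval, peval]
    rcases hv : keval A φ <;> simp_all [TV.negv]
  | conj φ ψ ihφ ihψ =>
    obtain ⟨h1, h2, h3, h4⟩ := ihφ
    obtain ⟨g1, g2, g3, g4⟩ := ihψ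
    simp only [keval, peval, TV.minT]
    rcases hφ : keval A φ <;> rcases hψ : keval A ψ <;> simp_all [TV.rank]

/-- If the Kleene value of φ in A is two-valued (f or t), then it coincides with
the pair-evaluation of φ in (A^l, A^u) and also with that in (A^u, A^l). -/
theorem keval_two_valued_eq_pair_eval {α : Type*} (A : α → TV) (φ : PForm α)
    (h : keval A φ ≠ TV.u) :
    (keval A φ = TV.t ↔ peval (low A) (high A) φ = true) ∧
    (keval A φ = TV.t ↔ peval (high A) (low A) φ = true) := by
  obtain ⟨h1, h2, h3, h4⟩ := pair_key A φ
  rcases hv : keval A φ <;> simp_all
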